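/- The Cayley transform is a bijection onto the punctured sphere: the map 𝒞 : ℂⁿ × ℝ → ℂ^{n+1} defined by 𝒞(z,t) = ( 2z/(1+|z|²−it), (1−|z|²+it)/(1+|z|²−it) ) takes values in the unit sphere S^{2n+1} = {ζ ∈ ℂ^{n+1} : |ζ| = 1}, never attains the south pole o = (0,…,0,−1), and is a bijection from ℂⁿ × ℝ onto S^{2n+1} ∖ {o}. -/
import Mathlib


open Complex

noncomputable section

/-- Squared Euclidean norm `|z|²` of `z ∈ ℂⁿ`. -/
def znormSq {n : ℕ} (z : Fin n → ℂ) : ℝ := ∑ j, Complex.normSq (z j)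

/-- The Cayley transform `𝒞 : ℂⁿ × ℝ → ℂ^{n+1}`,
`𝒞(z,t) = ( 2z/(1+|z|²−it), (1−|z|²+it)/(1+|z|²−it) )`. -/
def cayley {n : ℕ} (u : (Fin n → ℂ) × ℝ) : Fin (n + 1) → ℂ :=
  Fin.snoc (fun j => 2 * u.1 j / (1 + (znormSq u.1 : ℂ) - u.2 * Complex.I))
    ((1 - (znormSq u.1 : ℂ) + u.2 * Complex.I) / (1 + (znormSq u.1 : ℂ) - u.2 * Complex.I))

/-- The unit sphere `S^{2n+1} = {ζ ∈ ℂ^{n+1} : |ζ| = 1}`. -/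
def unitSphereC (n : ℕ) : Set (Fin (n + 1) → ℂ) :=
  {ζ | ∑ j, Complex.normSq (ζ j) = 1}

/-- The south pole `o = (0,…,0,−1) ∈ ℂ^{n+1}`. -/
def southPole (n : ℕ) : Fin (n + 1) → ℂ := Fin.snoc (fun _ => 0) (-1)

lemma znormSq_nonneg' {n : ℕ} (z : Fin n → ℂ) : 0 ≤ znormSq z :=
  Finset.sum_nonneg fun _ _ => Complex.normSq_nonneg _

lemma denom_ne_zero' {s t : ℝ} (hs : 0 ≤ s) : (1 + (s:ℂ) - t * Complex.I) ≠ 0 := by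
  intro h
  have := congrArg Complex.re h
  simp at this
  linarith

lemma normSq_denom' (s t : ℝ) :
    Complex.normSq (1 + (s:ℂ) - t * Complex.I) = (1+s)^2 + t^2 := by
  simp [Complex.normSq_apply]
  ring

lemma normSq_num' (s t : ℝ) :
    Complex.normSq (1 - (s:ℂ) + t * Complex.I) = (1-s)^2 + t^2 := by
  simp [Complex.normSq_apply]
  ring

lemma cayley_last' {n : ℕ} (u : (Fin n → ℂ) × ℝ) :
    cayley u (Fin.last n) =
      (1 - (znormSq u.1 : ℂ) + u.2 * Complex.I) /
        (1 + (znormSq u.1 : ℂ) - u.2 * Complex.I) := by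
  simp [cayley]

lemma cayley_castSucc' {n : ℕ} (u : (Fin n → ℂ) × ℝ) (j : Fin n) :
    cayley u (j.castSucc) =
      2 * u.1 j / (1 + (znormSq u.1 : ℂ) - u.2 * Complex.I) := by
  simp [cayley]

lemma cayley_mem' {n : ℕ} (u : (Fin n → ℂ) × ℝ) : cayley u ∈ unitSphereC n := by
  obtain ⟨z, t⟩ := u
  have hs : (0:ℝ) ≤ znormSq z := znormSq_nonneg' z
  set s := znormSq z with hsdef
  have hN : ((1+s)^2 + t^2 : ℝ) ≠ 0 := by positivity
  show ∑ j, Complex.normSq (cayley (z, t) j) = 1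
  rw [Fin.sum_univ_castSucc]
  simp only [cayley, Fin.snoc_castSucc, Fin.snoc_last]
  have h2 : Complex.normSq 2 = 4 := by norm_num [Complex.normSq_apply]
  simp only [Complex.normSq_div, Complex.normSq_mul, h2]
  show ∑ j, 4 * Complex.normSq (z j) /
      Complex.normSq (1 + (s:ℂ) - t * Complex.I) + _ = 1
  rw [normSq_denom', normSq_num', ← Finset.sum_div, ← Finset.mul_sum]
  have hfold : ∑ i : Fin n, Complex.normSq (z i) = s := hsdef.symm
  rw [hfold]
  field_simp
  ring

/-- key algebraic relation: `(1 + c) * w = 2`. -/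
lemma one_add_last_mul {n : ℕ} (u : (Fin n → ℂ) × ℝ) :
    (1 + cayley u (Fin.last n)) * (1 + (znormSq u.1 : ℂ) - u.2 * Complex.I) = 2 := by
  have hw := denom_ne_zero' (t := u.2) (znormSq_nonneg' u.1)
  rw [cayley_last']
  field_simp
  ring

lemma cayley_ne_southPole' {n : ℕ} (u : (Fin n → ℂ) × ℝ) : cayley u ≠ southPole n := by
  intro h
  have hl : cayley u (Fin.last n) = -1 := by
    rw [h]; simp [southPole]
  have := one_add_last_mul u
  rw [hl] at this
  simp at this

/-- **The Cayley transform is a bijection onto the punctured sphere:** `𝒞` takes values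
in the unit sphere `S^{2n+1}`, never attains the south pole `o = (0,…,0,−1)`, and is a
bijection from `ℂⁿ × ℝ` onto `S^{2n+1} ∖ {o}`. -/
theorem cayley_bijOn_punctured_sphere (n : ℕ) (hn : 1 ≤ n) :
    (∀ u : (Fin n → ℂ) × ℝ, cayley u ∈ unitSphereC n) ∧
      (∀ u : (Fin n → ℂ) × ℝ, cayley u ≠ southPole n) ∧
      Set.BijOn cayley Set.univ (unitSphereC n \ {southPole n}) := by
  refine ⟨cayley_mem', cayley_ne_southPole', ?_, ?_, ?_⟩
  · intro u _
    exact ⟨cayley_mem' u, cayley_ne_southPole' u⟩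
  · -- injectivity
    rintro ⟨z, t⟩ - ⟨z', t'⟩ - h
    have hw := denom_ne_zero' (t := t) (znormSq_nonneg' z)
    have hw' := denom_ne_zero' (t := t') (znormSq_nonneg' z')
    have hc : cayley (z, t) (Fin.last n) = cayley (z', t') (Fin.last n) := by rw [h]
    have h1 := one_add_last_mul (z, t)
    have h2 := one_add_last_mul (z', t')
    rw [hc] at h1
    have hcne : (1 + cayley (z', t') (Fin.last n)) ≠ 0 := by
      intro h0
      rw [h0, zero_mul] at h2
      exact two_ne_zero h2.symm
    have hweq : (1 + (znormSq z : ℂ) - t * Complex.I)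
        = (1 + (znormSq z' : ℂ) - t' * Complex.I) :=
      mul_left_cancel₀ hcne (h1.trans h2.symm)
    have hre := congrArg Complex.re hweq
    have him := congrArg Complex.im hweq
    simp at hre him
    have hzz : z = z' := by
      funext j
      have hj : cayley (z, t) (j.castSucc) = cayley (z', t') (j.castSucc) := by rw [h]
      rw [cayley_castSucc', cayley_castSucc'] at hj
      simp only at hj
      rw [← hweq] at hj
      field_simp [hw] at hj
      exact hj
    have hss : znormSq z = znormSq z' := by rw [hzz]
    exact Prod.ext hzz him
  · -- surjectivity
    rintro ζ ⟨hζ, hne⟩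
    have hζ' : ∑ j, Complex.normSq (ζ j) = 1 := hζ
    set c := ζ (Fin.last n) with hcdef
    have hsum : ∑ j : Fin n, Complex.normSq (ζ j.castSucc) = 1 - Complex.normSq c := by
      rw [Fin.sum_univ_castSucc] at hζ'
      linarith
    have h1c : (1 + c) ≠ 0 := by
      intro h0
      have hcm : c = -1 := by linear_combination h0
      apply hne
      show ζ = southPole n
      have hz0 : ∀ j : Fin n, ζ j.castSucc = 0 := by
        have hs0 : ∑ j : Fin n, Complex.normSq (ζ j.castSucc) = 0 := by
          rw [hsum, hcm]; simp
        intro j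
        have := (Finset.sum_eq_zero_iff_of_nonneg
          (fun i _ => Complex.normSq_nonneg (ζ i.castSucc))).mp hs0 j (Finset.mem_univ j)
        exact Complex.normSq_eq_zero.mp this
      funext j
      refine Fin.lastCases ?_ ?_ j
      · rw [← hcdef, hcm]; simp [southPole]
      · intro i; rw [hz0 i]; simp [southPole]
    set d : ℂ := (1 - c) / (1 + c) with hddef
    set t : ℝ := -d.im with htdef
    set z : Fin n → ℂ := fun j => ζ j.castSucc / (1 + c) with hzdef
    have hnsq : Complex.normSq (1 + c) ≠ 0 := by
      simpa using h1c
    have hsz : znormSq z = d.re := by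
      have : znormSq z = (1 - Complex.normSq c) / Complex.normSq (1 + c) := by
        unfold znormSq
        simp only [hzdef, Complex.normSq_div]
        rw [← Finset.sum_div, hsum]
      rw [this, hddef, Complex.div_re]
      simp [Complex.normSq_apply]
      ring
    have hsd : (znormSq z : ℂ) - t * Complex.I = d := by
      apply Complex.ext
      · simp [hsz]
      · simp [htdef]
    refine ⟨(z, t), Set.mem_univ _, ?_⟩
    have hdenom : (1 + (znormSq z : ℂ) - t * Complex.I) = 1 + d := by
      rw [← hsd]; ring
    have h1d : (1 + d) * (1 + c) = 2 := by
      rw [hddef]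
      field_simp
      ring
    have h1dne : (1 + d) ≠ 0 := by
      intro h0
      rw [h0, zero_mul] at h1d
      exact two_ne_zero h1d.symm
    have hd2 : d * (1 + c) = 1 - c := by
      rw [hddef]; field_simp
    have hzi : ∀ i : Fin n, z i = ζ i.castSucc / (1 + c) := fun i => by rw [hzdef]
    clear_value t z d
    funext j
    refine Fin.lastCases ?_ ?_ j
    · rw [cayley_last']
      show (1 - (znormSq z : ℂ) + t * Complex.I) / (1 + (znormSq z : ℂ) - t * Complex.I) = c
      have hnum : (1 - (znormSq z : ℂ) + t * Complex.I) = 1 - d := by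
        rw [← hsd]; ring
      rw [hnum, hdenom]
      rw [div_eq_iff h1dne]
      linear_combination -hd2
    · intro i
      rw [cayley_castSucc']
      show 2 * z i / (1 + (znormSq z : ℂ) - t * Complex.I) = ζ i.castSucc
      rw [hdenom, hzi i]
      rw [div_eq_iff h1dne]
      field_simp
      linear_combination -(ζ i.castSucc) * h1d

end
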